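/- Let β* be s*-sparse with support S*, and let v ∈ ℝ^p. If β̂ = T_s(v) with s ≥ s*, then ‖β̂ − β*‖₂ ≤ 2‖(v − β*)_{S* ∪ supp(β̂)}‖₂, where the subscript denotes restriction of coordinates to the set S* ∪ supp(β̂). -/

import Mathlib

/-!
On `W = S* ∪ A` (with `A` the kept coordinates), `β̂ - v` equals `-v` on `S* \ A` and vanishes on
`A`, while `v - β* = v` on `A \ S*`. Since `|S*| ≤ |A|` and `A` holds the largest entries of `|v|`,
an exchange argument gives `∑_{S* \ A} v² ≤ ∑_{A \ S*} v²`, i.e. `‖β̂ - v‖_W ≤ ‖v - β*‖_W`; the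
triangle inequality through `v` then yields the factor 2. Finally, `β̂ - β*` vanishes off `W`,
and `v - β*` vanishes on `W` off `S* ∪ supp β̂`.
-/

open Finset

theorem Real.sqrt_sum_sq_sub_le {ι : Type*} (s : Finset ι) (f g h : ι → ℝ) :
    √(∑ i ∈ s, (f i - h i) ^ 2) ≤ √(∑ i ∈ s, (f i - g i) ^ 2) + √(∑ i ∈ s, (g i - h i) ^ 2) := by
  simpa [Real.sqrt_eq_rpow, sq_abs] using
    Real.Lp_add_le s (fun i => f i - g i) (fun i => g i - h i) one_le_two

theorem Finset.sum_sdiff_le_sum_sdiff_of_forall_le {ι M : Type*} [DecidableEq ι]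
    [AddCommMonoid M] [LinearOrder M] [IsOrderedAddMonoid M]
    {f : ι → M} (hf : ∀ i, 0 ≤ f i) {A B : Finset ι} (hBA : #B ≤ #A)
    (htop : ∀ i ∈ A, ∀ j ∉ A, f j ≤ f i) :
    ∑ i ∈ B \ A, f i ≤ ∑ i ∈ A \ B, f i := by
  have hcard : #(B \ A) ≤ #(A \ B) := by
    rw [card_sdiff, card_sdiff, inter_comm]; omega
  rcases (A \ B).eq_empty_or_nonempty with hAB | hAB
  · rw [hAB, card_empty, Nat.le_zero, card_eq_zero] at hcard
    simp [hAB, hcard]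
  obtain ⟨m, hm, hmin⟩ := exists_min_image (A \ B) f hAB
  calc ∑ i ∈ B \ A, f i ≤ #(B \ A) • f m :=
        sum_le_card_nsmul _ _ _ fun j hj => htop m (mem_sdiff.1 hm).1 j (mem_sdiff.1 hj).2
    _ ≤ #(A \ B) • f m := nsmul_le_nsmul_left (hf m) hcard
    _ ≤ ∑ i ∈ A \ B, f i := card_nsmul_le_sum _ _ _ hmin

section HardThreshold

variable {ι : Type*} [DecidableEq ι] {v β : ι → ℝ} {A S : Finset ι}

theorem sum_sq_hardThreshold_sub_le (hlargest : ∀ i ∈ A, ∀ j ∉ A, |v j| ≤ |v i|)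
    (hβ : ∀ i ∉ S, β i = 0) (hSA : #S ≤ #A) :
    ∑ i ∈ S ∪ A, ((if i ∈ A then v i else 0) - v i) ^ 2 ≤ ∑ i ∈ S ∪ A, (v i - β i) ^ 2 := by
  have hexchange : ∑ i ∈ S \ A, v i ^ 2 ≤ ∑ i ∈ A \ S, v i ^ 2 :=
    sum_sdiff_le_sum_sdiff_of_forall_le (fun i => sq_nonneg _) hSA
      fun i hi j hj => sq_le_sq.2 (hlargest i hi j hj)
  calc ∑ i ∈ S ∪ A, ((if i ∈ A then v i else 0) - v i) ^ 2
      = ∑ i ∈ S \ A, v i ^ 2 := by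
        rw [← sdiff_union_self_eq_union, sum_union disjoint_sdiff_self_left,
          sum_eq_zero (s := A) fun i hi => by simp [hi], add_zero]
        exact sum_congr rfl fun i hi => by simp [(mem_sdiff.1 hi).2]
    _ ≤ ∑ i ∈ A \ S, (v i - β i) ^ 2 := by
        refine hexchange.trans_eq (sum_congr rfl fun i hi => ?_)
        rw [hβ i (mem_sdiff.1 hi).2, sub_zero]
    _ ≤ ∑ i ∈ S ∪ A, (v i - β i) ^ 2 :=
        sum_le_sum_of_subset_of_nonneg (sdiff_subset.trans subset_union_right)
          fun i _ _ => sq_nonneg _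

variable [Fintype ι]

theorem sum_sq_hardThreshold_sub_eq_sum_union (hβ : ∀ i ∉ S, β i = 0) :
    ∑ i, ((if i ∈ A then v i else 0) - β i) ^ 2 =
      ∑ i ∈ S ∪ A, ((if i ∈ A then v i else 0) - β i) ^ 2 := by
  refine (sum_subset (subset_univ _) fun i _ hi => ?_).symm
  rw [mem_union, not_or] at hi
  rw [if_neg hi.2, hβ i hi.1]; ring

theorem sum_union_sq_sub_eq_sum_union_support_hardThreshold (hβ : ∀ i ∉ S, β i = 0) :
    ∑ i ∈ S ∪ A, (v i - β i) ^ 2 =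
      ∑ i ∈ S ∪ univ.filter (fun i => (if i ∈ A then v i else 0) ≠ 0), (v i - β i) ^ 2 := by
  have hsupp : S ∪ univ.filter (fun i => (if i ∈ A then v i else 0) ≠ 0) ⊆ S ∪ A :=
    union_subset_union_right fun i hi => by
      by_contra hiA
      exact (mem_filter.1 hi).2 (if_neg hiA)
  refine (sum_subset hsupp fun i hi hiU => ?_).symm
  simp only [mem_union, mem_filter, mem_univ, true_and, not_or, not_not] at hi hiU
  have hvi : v i = 0 := by simpa [hi.resolve_left hiU.1] using hiU.2
  rw [hβ i hiU.1, hvi]; ring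

end HardThreshold

theorem hard_thresholding_error_bound_general {p s : ℕ}
    (v βstar : Fin p → ℝ) (A : Finset (Fin p)) (hA : A.card = s)
    (hlargest : ∀ i ∈ A, ∀ j ∉ A, |v j| ≤ |v i|)
    (hsparse : (univ.filter (fun i => βstar i ≠ 0)).card ≤ s) :
    Real.sqrt (∑ i, ((if i ∈ A then v i else 0) - βstar i) ^ 2) ≤
      2 * Real.sqrt (∑ i ∈ (univ.filter (fun i => βstar i ≠ 0)) ∪
        (univ.filter (fun i => (if i ∈ A then v i else 0) ≠ 0)), (v i - βstar i) ^ 2) := by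
  set S := univ.filter (fun i => βstar i ≠ 0)
  set vhat : Fin p → ℝ := fun i => if i ∈ A then v i else 0
  have hβ : ∀ i ∉ S, βstar i = 0 := by simp [S]
  have hthr : ∑ i ∈ S ∪ A, (vhat i - v i) ^ 2 ≤ ∑ i ∈ S ∪ A, (v i - βstar i) ^ 2 :=
    sum_sq_hardThreshold_sub_le hlargest hβ (hA ▸ hsparse)
  calc √(∑ i, (vhat i - βstar i) ^ 2) = √(∑ i ∈ S ∪ A, (vhat i - βstar i) ^ 2) := by
        rw [sum_sq_hardThreshold_sub_eq_sum_union hβ]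
    _ ≤ √(∑ i ∈ S ∪ A, (vhat i - v i) ^ 2) + √(∑ i ∈ S ∪ A, (v i - βstar i) ^ 2) :=
        Real.sqrt_sum_sq_sub_le _ _ _ _
    _ ≤ 2 * √(∑ i ∈ S ∪ A, (v i - βstar i) ^ 2) := by
        linarith [Real.sqrt_le_sqrt hthr]
    _ = 2 * √(∑ i ∈ S ∪ univ.filter (fun i => vhat i ≠ 0), (v i - βstar i) ^ 2) := by
        rw [sum_union_sq_sub_eq_sum_union_support_hardThreshold hβ]

/-- Key thresholding lemma: if `β̂ = T_s(v)` with `s ≥ s* = ‖β*‖₀`, then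
`‖β̂ - β*‖₂ ≤ 2 ‖(v - β*)_{S* ∪ supp(β̂)}‖₂`. -/
theorem hard_thresholding_error_bound {p s : ℕ} (hs1 : 1 ≤ s)
    (v βstar : Fin p → ℝ) (A : Finset (Fin p)) (hA : A.card = s)
    (hlargest : ∀ i ∈ A, ∀ j ∉ A, |v j| ≤ |v i|)
    (hsparse : (univ.filter (fun i => βstar i ≠ 0)).card ≤ s) :
    Real.sqrt (∑ i, ((if i ∈ A then v i else 0) - βstar i) ^ 2) ≤
      2 * Real.sqrt (∑ i ∈ (univ.filter (fun i => βstar i ≠ 0)) ∪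
        (univ.filter (fun i => (if i ∈ A then v i else 0) ≠ 0)), (v i - βstar i) ^ 2) :=
  hard_thresholding_error_bound_general v βstar A hA hlargest hsparse
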